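/- arXiv:2010.00817 — 5 statements merged into one kernel-verified Lean document; each statement's English description precedes it below -/
import Mathlib

section
/- Let R : ℝ^d → ℝ be a lower semicontinuous convex function, let A ∈ ℝ^{d×d} be symmetric positive definite, let ζ ∈ ℝ^d, and let w' = prox_R^{A^{-1}}(w − Aζ) for some w ∈ ℝ^d. Then for every z ∈ ℝ^d, R(w') ≤ R(z) + ⟨z − w', ζ⟩ + (1/2)[ ‖z − w‖_{A^{-1}}² − ‖w' − w‖_{A^{-1}}² − ‖w' − z‖_{A^{-1}}² ]. -/
open scoped BigOperators RealInnerProductSpace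

/-!
The prox point `w'` minimizes `y ↦ ½‖y - v‖²_{A⁻¹} + R y` with `v = w - Aζ`. Comparing it with
the points `w' + t (z - w')` of the segment towards `z`, convexity of `R` gives
`R w' ≤ R z + ⟪w' - v, A⁻¹ (z - w')⟫ + O(t)`, and letting `t → 0` removes the error term.
Splitting `w' - v = (w' - w) + Aζ`, the `Aζ` part contributes `⟪z - w', ζ⟫`, and the three-point
identity for `‖·‖_{A⁻¹}` turns `⟪w' - w, A⁻¹ (z - w')⟫` into the bracket of the claim.
-/

abbrev Euc (d : ℕ) := EuclideanSpace ℝ (Fin d)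

noncomputable def mdot {d : ℕ} (M : Matrix (Fin d) (Fin d) ℝ) (x : Euc d) : Euc d :=
  Matrix.toEuclideanLin M x

noncomputable def qf {d : ℕ} (M : Matrix (Fin d) (Fin d) ℝ) (x : Euc d) : ℝ :=
  ⟪x, mdot M x⟫

def IsProxR {d : ℕ} (R : Euc d → ℝ) (M : Matrix (Fin d) (Fin d) ℝ) (w u : Euc d) : Prop :=
  ∀ y, 2⁻¹ * qf M (u - w) + R u ≤ 2⁻¹ * qf M (y - w) + R y

open Set Filter Topology

lemma le_of_forall_le_add_mul {a b c : ℝ} (h : ∀ t ∈ Ioc (0 : ℝ) 1, a ≤ b + t * c) : a ≤ b := by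
  have hcont : Continuous fun t : ℝ => b + t * c := by fun_prop
  have hlim : Tendsto (fun t : ℝ => b + t * c) (𝓝[>] 0) (𝓝 b) :=
    (hcont.tendsto' 0 b (by simp)).mono_left nhdsWithin_le_nhds
  refine ge_of_tendsto hlim ?_
  filter_upwards [Ioc_mem_nhdsGT zero_lt_one] with t ht using h t ht

namespace LinearMap

variable {E : Type*} [NormedAddCommGroup E] [InnerProductSpace ℝ E] {T : E →ₗ[ℝ] E}

lemma IsSymmetric.inner_add_map_add (hT : T.IsSymmetric) (x y : E) :
    ⟪x + y, T (x + y)⟫ = ⟪x, T x⟫ + 2 * ⟪x, T y⟫ + ⟪y, T y⟫ := by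
  rw [map_add, inner_add_left, inner_add_right, inner_add_right, ← hT y x, real_inner_comm x (T y)]
  ring

lemma inner_smul_map_smul (t : ℝ) (x : E) : ⟪t • x, T (t • x)⟫ = t ^ 2 * ⟪x, T x⟫ := by
  rw [map_smul, real_inner_smul_left, real_inner_smul_right]
  ring

lemma inner_neg_map_neg (x : E) : ⟪-x, T (-x)⟫ = ⟪x, T x⟫ := by
  rw [map_neg, inner_neg_neg]

lemma IsSymmetric.two_mul_inner_map_sub (hT : T.IsSymmetric) (w u z : E) :
    2 * ⟪u - w, T (z - u)⟫ = ⟪z - w, T (z - w)⟫ - ⟪u - w, T (u - w)⟫ - ⟪u - z, T (u - z)⟫ := by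
  have hz : z - w = (u - w) + (z - u) := by abel
  have hu : u - z = -(z - u) := by abel
  rw [hz, hT.inner_add_map_add, hu, inner_neg_map_neg]
  ring

end LinearMap

section

variable {E : Type*} [NormedAddCommGroup E] [InnerProductSpace ℝ E]

theorem ConvexOn.le_add_inner_of_isMinOn {R : E → ℝ} (hR : ConvexOn ℝ univ R)
    {T : E →ₗ[ℝ] E} (hT : T.IsSymmetric) {v u : E}
    (hu : IsMinOn (fun y => 2⁻¹ * ⟪y - v, T (y - v)⟫ + R y) univ u) (z : E) :
    R u ≤ R z + ⟪u - v, T (z - u)⟫ := by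
  refine le_of_forall_le_add_mul (c := 2⁻¹ * ⟪z - u, T (z - u)⟫) fun t ⟨ht0, ht1⟩ => ?_
  have hseg : u + t • (z - u) = (1 - t) • u + t • z := by
    rw [smul_sub, sub_smul, one_smul]; abel
  have hconv : R (u + t • (z - u)) ≤ (1 - t) * R u + t * R z := by
    simpa only [hseg, smul_eq_mul] using
      hR.2 (mem_univ u) (mem_univ z) (by linarith) ht0.le (by ring)
  have hquad : ⟪u + t • (z - u) - v, T (u + t • (z - u) - v)⟫ = ⟪u - v, T (u - v)⟫
      + 2 * t * ⟪u - v, T (z - u)⟫ + t ^ 2 * ⟪z - u, T (z - u)⟫ := by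
    rw [add_sub_right_comm, hT.inner_add_map_add, LinearMap.inner_smul_map_smul,
      map_smul, inner_smul_right]
    ring
  have hmin : 2⁻¹ * ⟪u - v, T (u - v)⟫ + R u ≤
      2⁻¹ * ⟪u + t • (z - u) - v, T (u + t • (z - u) - v)⟫ + R (u + t • (z - u)) :=
    hu (mem_univ _)
  rw [hquad] at hmin
  have hmul : t * R u ≤ t * (R z + ⟪u - v, T (z - u)⟫ + t * (2⁻¹ * ⟪z - u, T (z - u)⟫)) := by
    linarith
  exact le_of_mul_le_mul_left hmul ht0

end

theorem prox_step_inequality_general {d : ℕ} (R : Euc d → ℝ)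
    (hconv : ConvexOn ℝ Set.univ R)
    (A : Matrix (Fin d) (Fin d) ℝ) (hA : A.PosDef) (ζ w w' : Euc d)
    (hprox : IsProxR R A⁻¹ (w - mdot A ζ) w') :
    ∀ z : Euc d,
      R w' ≤ R z + ⟪z - w', ζ⟫
        + 2⁻¹ * (qf A⁻¹ (z - w) - qf A⁻¹ (w' - w) - qf A⁻¹ (w' - z)) := by
  intro z
  have hT : (Matrix.toEuclideanLin A⁻¹).IsSymmetric :=
    Matrix.isSymmetric_toEuclideanLin_iff.mpr hA.inv.isHermitian
  have hinv : mdot A⁻¹ (mdot A ζ) = ζ := by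
    simp [mdot, Matrix.toLpLin_apply, Matrix.mulVec_mulVec,
      Matrix.nonsing_inv_mul A (isUnit_iff_ne_zero.mpr hA.det_pos.ne')]
  have hopt := hconv.le_add_inner_of_isMinOn hT (fun y _ => hprox y) z
  have hsplit : w' - (w - mdot A ζ) = (w' - w) + mdot A ζ := by abel
  have hζ : ⟪mdot A ζ, mdot A⁻¹ (z - w')⟫ = ⟪z - w', ζ⟫ :=
    calc ⟪mdot A ζ, mdot A⁻¹ (z - w')⟫ = ⟪mdot A⁻¹ (mdot A ζ), z - w'⟫ := (hT _ _).symm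
      _ = ⟪z - w', ζ⟫ := by rw [hinv, real_inner_comm]
  have hthree := hT.two_mul_inner_map_sub w w' z
  rw [hsplit, inner_add_left] at hopt
  simp only [qf, mdot] at hζ hopt ⊢
  linarith

/-- if `R : ℝ^d → ℝ` is lsc convex, `A` symmetric positive definite, `ζ ∈ ℝ^d` and
`w' = prox_R^{A⁻¹}(w − Aζ)`, then for every `z`,
`R(w') ≤ R(z) + ⟨z − w', ζ⟩ + (1/2)[‖z − w‖_{A⁻¹}² − ‖w' − w‖_{A⁻¹}² − ‖w' − z‖_{A⁻¹}²]`. -/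
theorem prox_step_inequality {d : ℕ} (R : Euc d → ℝ)
    (hlsc : LowerSemicontinuous R) (hconv : ConvexOn ℝ Set.univ R)
    (A : Matrix (Fin d) (Fin d) ℝ) (hA : A.PosDef) (ζ w w' : Euc d)
    (hprox : IsProxR R A⁻¹ (w - mdot A ζ) w') :
    ∀ z : Euc d,
      R w' ≤ R z + ⟪z - w', ζ⟫
        + 2⁻¹ * (qf A⁻¹ (z - w) - qf A⁻¹ (w' - w) - qf A⁻¹ (w' - z)) :=
  prox_step_inequality_general R hconv A hA ζ w w' hprox
end

section
/- Let F : ℝ^d → ℝ be differentiable with L_Ω-Lipschitz gradient, let R : ℝ^d → ℝ be lower semicontinuous and convex, and set P = F + R. Let A ∈ ℝ^{d×d} be symmetric positive definite, ζ ∈ ℝ^d, and w' = prox_R^{A^{-1}}(w − Aζ) for some w ∈ ℝ^d. Then for every z ∈ ℝ^d, P(w') ≤ P(z) + ⟨w' − z, ∇F(w) − ζ⟩ + (1/2)(w' − w)ᵀ(L_Ω I − A^{-1})(w' − w) + (1/2)(z − w)ᵀ(L_Ω I + A^{-1})(z − w) − (1/2)‖w' − z‖_{A^{-1}}². -/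
open scoped BigOperators RealInnerProductSpace

/-! The two-sided descent lemma for the `L`-smooth `F`, applied at `w` towards `w'` and towards
`z`, bounds `F w'` from above and `F z` from below by affine terms in `∇F w` up to
`L/2`-multiples of squared distances. Since `w'` minimizes the convex prox objective, comparing it with the points of the
segment `[w', z]` gives the variational inequality
`R w' ≤ R z + ⟪z - w', A⁻¹ (w' - w) + ζ⟫`. Adding the three bounds and expanding
`⟪z - w', A⁻¹ (w' - w)⟫` with the three-point identity for the symmetric `A⁻¹` gives the claim. -/

open Set Filter Topology

theorem nonneg_of_forall_mul_add_sq_mul_nonneg {a b : ℝ}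
    (h : ∀ t : ℝ, 0 < t → t ≤ 1 → 0 ≤ t * a + t ^ 2 * b) : 0 ≤ a := by
  have hlim : Tendsto (fun t : ℝ => a + t * b) (𝓝[>] 0) (𝓝 a) := by
    refine tendsto_nhdsWithin_of_tendsto_nhds ?_
    simpa using (by fun_prop : Continuous fun t : ℝ => a + t * b).tendsto 0
  refine ge_of_tendsto hlim ?_
  filter_upwards [Ioc_mem_nhdsGT zero_lt_one] with t ht
  have := h t ht.1 ht.2
  nlinarith [ht.1]

section InnerProductSpace

variable {E : Type*} [NormedAddCommGroup E] [InnerProductSpace ℝ E]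

theorem HasGradientAt.hasDerivAt_comp_lineMap [CompleteSpace E] {F : E → ℝ} {g x u : E}
    {t : ℝ} (hF : HasGradientAt F g (x + t • u)) :
    HasDerivAt (fun s : ℝ => F (x + s • u)) ⟪g, u⟫ t := by
  have hline : HasDerivAt (fun s : ℝ => x + s • u) u t := by
    simpa using ((hasDerivAt_id t).smul_const u).const_add x
  simpa [Function.comp_def] using hF.hasFDerivAt.comp_hasDerivAt t hline

theorem abs_sub_sub_inner_le_of_lipschitz_gradient [CompleteSpace E] {F : E → ℝ}
    {g : E → E} (hF : ∀ x, HasGradientAt F (g x) x) {L : ℝ}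
    (hg : ∀ x y, ‖g x - g y‖ ≤ L * ‖x - y‖) (x y : E) :
    |F y - F x - ⟪g x, y - x⟫| ≤ L / 2 * ‖y - x‖ ^ 2 := by
  set u := y - x
  have hf : ∀ t : ℝ, HasDerivAt (fun s => F (x + s • u) - F x - s * ⟪g x, u⟫)
      (⟪g (x + t • u), u⟫ - ⟪g x, u⟫) t := fun t =>
    (((hF _).hasDerivAt_comp_lineMap).sub_const _).sub
      (by simpa using (hasDerivAt_id t).mul_const _)
  have hB : ∀ t : ℝ, HasDerivAt (fun s => L / 2 * s ^ 2 * ‖u‖ ^ 2) (L * t * ‖u‖ ^ 2) t :=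
    fun t => (((hasDerivAt_pow 2 t).const_mul (L / 2)).mul_const (‖u‖ ^ 2)).congr_deriv
      (by push_cast; ring)
  have bound : ∀ t ∈ Ico (0 : ℝ) 1,
      ‖⟪g (x + t • u), u⟫ - ⟪g x, u⟫‖ ≤ L * t * ‖u‖ ^ 2 := by
    intro t ht
    calc ‖⟪g (x + t • u), u⟫ - ⟪g x, u⟫‖ = |⟪g (x + t • u) - g x, u⟫| := by
          rw [inner_sub_left, Real.norm_eq_abs]
      _ ≤ ‖g (x + t • u) - g x‖ * ‖u‖ := abs_real_inner_le_norm _ _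
      _ ≤ L * ‖t • u‖ * ‖u‖ := by
          gcongr
          simpa using hg (x + t • u) x
      _ = L * t * ‖u‖ ^ 2 := by rw [norm_smul, Real.norm_of_nonneg ht.1]; ring
  have := image_norm_le_of_norm_deriv_right_le_deriv_boundary
    (fun t _ => (hf t).continuousAt.continuousWithinAt) (fun t _ => (hf t).hasDerivWithinAt)
    (by simp) hB bound (right_mem_Icc.2 zero_le_one)
  simpa [u] using this

namespace LinearMap.IsSymmetric

variable {T : E →ₗ[ℝ] E}

theorem inner_map_comm (hT : T.IsSymmetric) (x y : E) : ⟪x, T y⟫ = ⟪y, T x⟫ := by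
  rw [← hT, real_inner_comm]

theorem inner_add_smul_map_add_smul (hT : T.IsSymmetric) (a u : E) (t : ℝ) :
    ⟪a + t • u, T (a + t • u)⟫ = ⟪a, T a⟫ + 2 * t * ⟪u, T a⟫ + t ^ 2 * ⟪u, T u⟫ := by
  simp only [map_add, map_smul, inner_add_left, inner_add_right, inner_smul_left,
    inner_smul_right, conj_trivial, hT.inner_map_comm a u]
  ring

theorem inner_sub_map_sub_three_point (hT : T.IsSymmetric) (u z w : E) :
    ⟪z - u, T (u - w)⟫ =
      2⁻¹ * (⟪z - w, T (z - w)⟫ - ⟪u - w, T (u - w)⟫ - ⟪u - z, T (u - z)⟫) := by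
  simp only [map_sub, inner_sub_left, inner_sub_right]
  linear_combination (2⁻¹ : ℝ) *
    (hT.inner_map_comm w z - hT.inner_map_comm w u - hT.inner_map_comm u z)

theorem le_add_inner_of_prox_minimizer (hT : T.IsSymmetric) {R : E → ℝ}
    (hR : ConvexOn ℝ univ R) {v u : E}
    (hu : ∀ y, 2⁻¹ * ⟪u - v, T (u - v)⟫ + R u ≤ 2⁻¹ * ⟪y - v, T (y - v)⟫ + R y) (z : E) :
    R u ≤ R z + ⟪z - u, T (u - v)⟫ := by
  suffices 0 ≤ ⟪z - u, T (u - v)⟫ + R z - R u by linarith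
  refine nonneg_of_forall_mul_add_sq_mul_nonneg (b := 2⁻¹ * ⟪z - u, T (z - u)⟫)
    fun t ht0 ht1 => ?_
  have hmin := hu (u + t • (z - u))
  rw [show u + t • (z - u) - v = (u - v) + t • (z - u) by abel,
    hT.inner_add_smul_map_add_smul] at hmin
  have hconv : R (u + t • (z - u)) ≤ (1 - t) * R u + t * R z := by
    simpa only [smul_eq_mul, show (1 - t) • u + t • z = u + t • (z - u) by module] using
      hR.2 (mem_univ u) (mem_univ z) (sub_nonneg.2 ht1) ht0.le (sub_add_cancel 1 t)
  nlinarith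

end LinearMap.IsSymmetric

end InnerProductSpace

section Matrix

variable {d : ℕ}

theorem mdot_inv_mdot {A : Matrix (Fin d) (Fin d) ℝ} (hA : IsUnit A.det) (x : Euc d) :
    mdot A⁻¹ (mdot A x) = x := by
  ext i
  simp [mdot, Matrix.toLpLin_apply, Matrix.mulVec_mulVec, Matrix.nonsing_inv_mul _ hA]

theorem qf_add (M N : Matrix (Fin d) (Fin d) ℝ) (x : Euc d) :
    qf (M + N) x = qf M x + qf N x := by
  simp [qf, mdot, inner_add_right]

theorem qf_sub (M N : Matrix (Fin d) (Fin d) ℝ) (x : Euc d) :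
    qf (M - N) x = qf M x - qf N x := by
  simp [qf, mdot, inner_sub_right]

theorem qf_smul (c : ℝ) (M : Matrix (Fin d) (Fin d) ℝ) (x : Euc d) :
    qf (c • M) x = c * qf M x := by
  simp [qf, mdot, inner_smul_right]

theorem qf_one (x : Euc d) : qf 1 x = ‖x‖ ^ 2 := by
  simp [qf, mdot]

end Matrix

theorem prox_step_composite_inequality_general {d : ℕ} (F : Euc d → ℝ) (gF : Euc d → Euc d)
    (hF : ∀ x, HasGradientAt F (gF x) x)
    (LΩ : ℝ) (hLip : ∀ x y, ‖gF x - gF y‖ ≤ LΩ * ‖x - y‖)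
    (R : Euc d → ℝ) (hconv : ConvexOn ℝ Set.univ R)
    (A : Matrix (Fin d) (Fin d) ℝ) (hA : A.PosDef) (ζ w w' : Euc d)
    (hprox : IsProxR R A⁻¹ (w - mdot A ζ) w') :
    ∀ z : Euc d,
      F w' + R w' ≤ F z + R z + ⟪w' - z, gF w - ζ⟫
        + 2⁻¹ * qf (LΩ • (1 : Matrix (Fin d) (Fin d) ℝ) - A⁻¹) (w' - w)
        + 2⁻¹ * qf (LΩ • (1 : Matrix (Fin d) (Fin d) ℝ) + A⁻¹) (z - w)
        - 2⁻¹ * qf A⁻¹ (w' - z) := by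
  intro z
  set T := Matrix.toEuclideanLin A⁻¹
  have hT : T.IsSymmetric := Matrix.isSymmetric_toEuclideanLin_iff.2 hA.inv.isHermitian
  have hR := hT.le_add_inner_of_prox_minimizer hconv hprox z
  have hTA : T (mdot A ζ) = ζ := mdot_inv_mdot (isUnit_iff_ne_zero.2 hA.det_pos.ne') ζ
  rw [show w' - (w - mdot A ζ) = (w' - w) + mdot A ζ by abel, map_add, hTA, inner_add_right,
    hT.inner_sub_map_sub_three_point] at hR
  have hFw' := (abs_le.1 (abs_sub_sub_inner_le_of_lipschitz_gradient hF hLip w w')).2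
  have hFz := (abs_le.1 (abs_sub_sub_inner_le_of_lipschitz_gradient hF hLip w z)).1
  have hinner : ⟪w' - z, gF w - ζ⟫ = ⟪gF w, w' - w⟫ - ⟪gF w, z - w⟫ + ⟪z - w', ζ⟫ := by
    simp only [inner_sub_left, inner_sub_right, real_inner_comm (gF w)]
    ring
  simp only [qf_add, qf_sub, qf_smul, qf_one, hinner]
  simp only [qf, mdot]
  linarith

/-- for `F` differentiable with `L_Ω`-Lipschitz gradient, `R` lsc convex,
`P = F + R`, `A` symmetric positive definite and `w' = prox_R^{A⁻¹}(w − Aζ)`, for every `z`: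
`P(w') ≤ P(z) + ⟨w' − z, ∇F(w) − ζ⟩ + (1/2)(w'−w)ᵀ(L_Ω I − A⁻¹)(w'−w)
 + (1/2)(z−w)ᵀ(L_Ω I + A⁻¹)(z−w) − (1/2)‖w'−z‖_{A⁻¹}²`. -/
theorem prox_step_composite_inequality {d : ℕ} (F : Euc d → ℝ) (gF : Euc d → Euc d)
    (hF : ∀ x, HasGradientAt F (gF x) x)
    (LΩ : ℝ) (hLip : ∀ x y, ‖gF x - gF y‖ ≤ LΩ * ‖x - y‖)
    (R : Euc d → ℝ) (hlsc : LowerSemicontinuous R) (hconv : ConvexOn ℝ Set.univ R)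
    (A : Matrix (Fin d) (Fin d) ℝ) (hA : A.PosDef) (ζ w w' : Euc d)
    (hprox : IsProxR R A⁻¹ (w - mdot A ζ) w') :
    ∀ z : Euc d,
      F w' + R w' ≤ F z + R z + ⟪w' - z, gF w - ζ⟫
        + 2⁻¹ * qf (LΩ • (1 : Matrix (Fin d) (Fin d) ℝ) - A⁻¹) (w' - w)
        + 2⁻¹ * qf (LΩ • (1 : Matrix (Fin d) (Fin d) ℝ) + A⁻¹) (z - w)
        - 2⁻¹ * qf A⁻¹ (w' - z) :=
  prox_step_composite_inequality_general F gF hF LΩ hLip R hconv A hA ζ w w' hprox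
end

section
/- Let f_1,…,f_n : ℝ^d → ℝ be differentiable with each f_i being L_i-smooth, F = (1/n)∑_{i=1}^n f_i, q_1,…,q_n > 0 with ∑_i q_i = 1, and L_Ω = max_i L_i/(n q_i). Fix w, w', v' ∈ ℝ^d and for each index i ∈ {1,…,n} define v(i) = (∇f_i(w) − ∇f_i(w'))/(n q_i) + v'. Then ∑_{i=1}^n q_i ‖v(i) − ∇F(w)‖₂² ≤ L_Ω² ‖w − w'‖₂² + ‖v' − ∇F(w')‖₂² − ‖∇F(w) − ∇F(w')‖₂². -/
open scoped BigOperators RealInnerProductSpace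

/-- The average `F = (1/n) ∑ᵢ fᵢ`. -/
noncomputable def Favg {d n : ℕ} (f : Fin n → Euc d → ℝ) (x : Euc d) : ℝ :=
  (n : ℝ)⁻¹ * ∑ i, f i x

/-- The averaged gradient `∇F = (1/n) ∑ᵢ ∇fᵢ`. -/
noncomputable def gAvg {d n : ℕ} (gf : Fin n → Euc d → Euc d) (x : Euc d) : Euc d :=
  (n : ℝ)⁻¹ • ∑ i, gf i x

lemma key_expand {d : ℕ} (m c : Euc d) :
    2 * ⟪m, c - m⟫ + ‖c - m‖ ^ 2 = ‖c‖ ^ 2 - ‖m‖ ^ 2 := by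
  have h1 : ‖c - m‖ ^ 2 = ‖c‖ ^ 2 - 2 * ⟪c, m⟫ + ‖m‖ ^ 2 := norm_sub_sq_real c m
  have h2 : ⟪m, c - m⟫ = ⟪c, m⟫ - ‖m‖ ^ 2 := by
    rw [inner_sub_right, real_inner_comm m c, real_inner_self_eq_norm_sq]
  rw [h1, h2]; ring

/-- for the single-sample recursive estimator `v(i) = (∇fᵢ(w) − ∇fᵢ(w'))/(n qᵢ) + v'`,
`∑ᵢ qᵢ ‖v(i) − ∇F(w)‖₂² ≤ L_Ω² ‖w − w'‖₂² + ‖v' − ∇F(w')‖₂² − ‖∇F(w) − ∇F(w')‖₂²`. -/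
theorem variance_bound_single {d n : ℕ} (hn : 0 < n)
    (f : Fin n → Euc d → ℝ) (gf : Fin n → Euc d → Euc d)
    (hgrad : ∀ i x, HasGradientAt (f i) (gf i x) x)
    (L : Fin n → ℝ) (hLip : ∀ i x y, ‖gf i x - gf i y‖ ≤ L i * ‖x - y‖)
    (q : Fin n → ℝ) (hq : ∀ i, 0 < q i) (hqs : ∑ i, q i = 1)
    (LΩ : ℝ) (hLΩ : IsGreatest (Set.range fun i => L i / ((n : ℝ) * q i)) LΩ)
    (w w' v' : Euc d) :
    ∑ i : Fin n, q i * ‖((n : ℝ) * q i)⁻¹ • (gf i w - gf i w') + v' - gAvg gf w‖ ^ 2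
      ≤ LΩ ^ 2 * ‖w - w'‖ ^ 2 + ‖v' - gAvg gf w'‖ ^ 2 - ‖gAvg gf w - gAvg gf w'‖ ^ 2 := by
  have hnpos : (0:ℝ) < (n : ℝ) := by exact_mod_cast hn
  have hnq : ∀ i, (0:ℝ) < (n : ℝ) * q i := fun i => mul_pos hnpos (hq i)
  set a : Fin n → Euc d := fun i => ((n : ℝ) * q i)⁻¹ • (gf i w - gf i w') with ha
  set m : Euc d := gAvg gf w - gAvg gf w' with hm
  set c : Euc d := v' - gAvg gf w' with hc
  -- weighted sum of a equals m
  have hsum : ∑ i, q i • a i = m := by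
    have h1 : ∀ i ∈ Finset.univ, q i • a i = (n : ℝ)⁻¹ • (gf i w - gf i w') := by
      intro i _
      rw [ha, smul_smul, mul_inv, mul_comm ((n:ℝ)⁻¹), ← mul_assoc, mul_inv_cancel₀ (ne_of_gt (hq i)), one_mul]
    rw [Finset.sum_congr rfl h1, ← Finset.smul_sum, hm]
    simp [gAvg, Finset.sum_sub_distrib, smul_sub]
  -- rewrite each term
  have hterm : ∀ i, a i + v' - gAvg gf w = a i + (c - m) := by
    intro i; rw [hc, hm]; abel
  have hLHS : ∑ i : Fin n, q i * ‖a i + v' - gAvg gf w‖ ^ 2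
      = ∑ i, q i * ‖a i‖ ^ 2 + (‖c‖ ^ 2 - ‖m‖ ^ 2) := by
    have h1 : ∀ i ∈ Finset.univ, q i * ‖a i + v' - gAvg gf w‖ ^ 2
        = q i * ‖a i‖ ^ 2 + 2 * ⟪q i • a i, c - m⟫ + q i * ‖c - m‖ ^ 2 := by
      intro i _
      rw [hterm i, norm_add_sq_real]
      simp only [ha, real_inner_smul_left]
      ring
    rw [Finset.sum_congr rfl h1, Finset.sum_add_distrib, Finset.sum_add_distrib,
      ← Finset.sum_mul, hqs, ← Finset.mul_sum (a := 2), ← sum_inner, hsum]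
    have := key_expand m c
    linarith
  rw [hLHS]
  have hbound : ∑ i, q i * ‖a i‖ ^ 2 ≤ LΩ ^ 2 * ‖w - w'‖ ^ 2 := by
    have h1 : ∀ i ∈ Finset.univ, q i * ‖a i‖ ^ 2 ≤ q i * (LΩ ^ 2 * ‖w - w'‖ ^ 2) := by
      intro i _
      have hLi : L i / ((n : ℝ) * q i) ≤ LΩ := hLΩ.2 ⟨i, rfl⟩
      have hna : ‖a i‖ ≤ LΩ * ‖w - w'‖ := by
        rw [ha]
        simp only [norm_smul, Real.norm_eq_abs, abs_of_pos (inv_pos.2 (hnq i))]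
        calc ((n : ℝ) * q i)⁻¹ * ‖gf i w - gf i w'‖
            ≤ ((n : ℝ) * q i)⁻¹ * (L i * ‖w - w'‖) := by
              apply mul_le_mul_of_nonneg_left (hLip i w w') (le_of_lt (inv_pos.2 (hnq i)))
          _ = (L i / ((n : ℝ) * q i)) * ‖w - w'‖ := by ring
          _ ≤ LΩ * ‖w - w'‖ := mul_le_mul_of_nonneg_right hLi (norm_nonneg _)
      have hsq : ‖a i‖ ^ 2 ≤ (LΩ * ‖w - w'‖) ^ 2 := by
        apply pow_le_pow_left₀ (norm_nonneg _) hna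
      calc q i * ‖a i‖ ^ 2 ≤ q i * (LΩ * ‖w - w'‖) ^ 2 :=
            mul_le_mul_of_nonneg_left hsq (le_of_lt (hq i))
        _ = q i * (LΩ ^ 2 * ‖w - w'‖ ^ 2) := by ring
    calc ∑ i, q i * ‖a i‖ ^ 2 ≤ ∑ i, q i * (LΩ ^ 2 * ‖w - w'‖ ^ 2) :=
          Finset.sum_le_sum h1
      _ = LΩ ^ 2 * ‖w - w'‖ ^ 2 := by rw [← Finset.sum_mul, hqs, one_mul]
  linarith
end

section
/- Let f_1,…,f_n : ℝ^d → ℝ be differentiable with each f_i being L_i-smooth, F = (1/n)∑_{i=1}^n f_i, q_1,…,q_n > 0 with ∑_i q_i = 1, and L_Ω = max_i L_i/(n q_i). Fix w, w', v' ∈ ℝ^d, fix a batch size b ≥ 1, and for each b-tuple ι = (i_1,…,i_b) ∈ {1,…,n}^b define v(ι) = (1/b)∑_{j=1}^b (∇f_{i_j}(w) − ∇f_{i_j}(w'))/(q_{i_j} n) + v'. Then ∑_{ι ∈ {1,…,n}^b} (∏_{j=1}^b q_{i_j}) · ‖v(ι) − ∇F(w)‖₂² ≤ (L_Ω²/b)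 ‖w − w'‖₂² + ‖v' − ∇F(w')‖₂². -/
open scoped BigOperators RealInnerProductSpace

lemma key_expect {d n : ℕ} (q : Fin n → ℝ) (hqs : ∑ i, q i = 1)
    (Z : Fin n → Euc d) (hZ : ∑ i, q i • Z i = 0) (c : Euc d) :
    ∀ b : ℕ, ∑ ι : Fin b → Fin n, (∏ j, q (ι j)) * ‖(∑ j, Z (ι j)) + c‖ ^ 2
      = b * (∑ i, q i * ‖Z i‖ ^ 2) + ‖c‖ ^ 2 := by
  intro b
  induction b generalizing c with
  | zero => simp
  | succ b ih =>
    rw [← (Fin.consEquiv (fun _ : Fin (b+1) => Fin n)).sum_comp]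
    rw [Fintype.sum_prod_type]
    simp only [Fin.consEquiv_apply]
    have step : ∀ i : Fin n,
        (∑ ι : Fin b → Fin n,
          (∏ j, q (Fin.cons (α := fun _ : Fin (b+1) => Fin n) i ι j)) * ‖(∑ j, Z (Fin.cons (α := fun _ : Fin (b+1) => Fin n) i ι j)) + c‖ ^ 2)
        = q i * (b * (∑ k, q k * ‖Z k‖ ^ 2) + ‖c + Z i‖ ^ 2) := by
      intro i
      have h1 : ∀ ι : Fin b → Fin n,
          (∏ j, q (Fin.cons (α := fun _ : Fin (b+1) => Fin n) i ι j)) = q i * ∏ j, q (ι j) := by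
        intro ι; rw [Fin.prod_univ_succ]; simp
      have h2 : ∀ ι : Fin b → Fin n,
          (∑ j, Z (Fin.cons (α := fun _ : Fin (b+1) => Fin n) i ι j)) + c = (∑ j, Z (ι j)) + (c + Z i) := by
        intro ι; rw [Fin.sum_univ_succ]; simp; abel
      calc (∑ ι : Fin b → Fin n,
          (∏ j, q (Fin.cons (α := fun _ : Fin (b+1) => Fin n) i ι j)) * ‖(∑ j, Z (Fin.cons (α := fun _ : Fin (b+1) => Fin n) i ι j)) + c‖ ^ 2)
          = q i * ∑ ι : Fin b → Fin n,
            (∏ j, q (ι j)) * ‖(∑ j, Z (ι j)) + (c + Z i)‖ ^ 2 := by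
            rw [Finset.mul_sum]; apply Finset.sum_congr rfl; intro ι _
            rw [h1 ι, h2 ι]; ring
        _ = q i * (b * (∑ k, q k * ‖Z k‖ ^ 2) + ‖c + Z i‖ ^ 2) := by rw [ih]
    rw [Finset.sum_congr rfl (fun i _ => step i)]
    have expand : ∀ i, ‖c + Z i‖ ^ 2 = ‖c‖ ^ 2 + 2 * ⟪c, Z i⟫ + ‖Z i‖ ^ 2 := by
      intro i; exact norm_add_sq_real c (Z i)
    have hinner : ∑ i, q i * ⟪c, Z i⟫ = 0 := by
      have : ∑ i, q i * ⟪c, Z i⟫ = ⟪c, ∑ i, q i • Z i⟫ := by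
        rw [inner_sum]; apply Finset.sum_congr rfl; intro i _
        rw [real_inner_smul_right]
      rw [this, hZ, inner_zero_right]
    have : ∑ i, q i * ((b : ℝ) * (∑ k, q k * ‖Z k‖ ^ 2) + ‖c + Z i‖ ^ 2)
        = (∑ i, q i) * ((b:ℝ) * (∑ k, q k * ‖Z k‖ ^ 2) + ‖c‖^2)
          + 2 * (∑ i, q i * ⟪c, Z i⟫) + ∑ i, q i * ‖Z i‖ ^ 2 := by
      rw [Finset.sum_mul, Finset.mul_sum, Finset.mul_sum, ← Finset.sum_add_distrib,
        ← Finset.sum_add_distrib]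
      apply Finset.sum_congr rfl; intro i _; rw [expand i]; ring
    rw [this, hqs, hinner]
    push_cast; ring

/-- for the mini-batch recursive estimator
`v(ι) = (1/b)∑ⱼ (∇f_{ιⱼ}(w) − ∇f_{ιⱼ}(w'))/(q_{ιⱼ} n) + v'` with `ι ∈ {1,…,n}^b`,
`E_ι ‖v(ι) − ∇F(w)‖₂² ≤ (L_Ω²/b) ‖w − w'‖₂² + ‖v' − ∇F(w')‖₂²`. -/
theorem variance_bound_minibatch {d n b : ℕ} (hn : 0 < n) (hb : 1 ≤ b)
    (f : Fin n → Euc d → ℝ) (gf : Fin n → Euc d → Euc d)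
    (hgrad : ∀ i x, HasGradientAt (f i) (gf i x) x)
    (L : Fin n → ℝ) (hLip : ∀ i x y, ‖gf i x - gf i y‖ ≤ L i * ‖x - y‖)
    (q : Fin n → ℝ) (hq : ∀ i, 0 < q i) (hqs : ∑ i, q i = 1)
    (LΩ : ℝ) (hLΩ : IsGreatest (Set.range fun i => L i / ((n : ℝ) * q i)) LΩ)
    (w w' v' : Euc d) :
    ∑ ι : Fin b → Fin n, (∏ j : Fin b, q (ι j)) *
        ‖(b : ℝ)⁻¹ • ∑ j : Fin b, (q (ι j) * (n : ℝ))⁻¹ • (gf (ι j) w - gf (ι j) w') + v'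
          - gAvg gf w‖ ^ 2
      ≤ LΩ ^ 2 / (b : ℝ) * ‖w - w'‖ ^ 2 + ‖v' - gAvg gf w'‖ ^ 2 := by
  have hb0 : (0:ℝ) < (b:ℝ) := by exact_mod_cast hb
  have hn0 : ((n:ℝ)) ≠ 0 := by positivity
  set X : Fin n → Euc d := fun i => (q i * (n:ℝ))⁻¹ • (gf i w - gf i w') with hX
  set μ : Euc d := gAvg gf w - gAvg gf w' with hμdef
  set Z : Fin n → Euc d := fun i => (b:ℝ)⁻¹ • (X i - μ) with hZdef
  set c : Euc d := v' - gAvg gf w' with hcdef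
  have hμ : ∑ i, q i • X i = μ := by
    have : ∀ i : Fin n, q i • X i = (n:ℝ)⁻¹ • (gf i w - gf i w') := by
      intro i
      rw [hX]; rw [smul_smul, mul_inv, ← mul_assoc, mul_inv_cancel₀ (hq i).ne']
      rw [one_mul]
    rw [Finset.sum_congr rfl (fun i _ => this i), ← Finset.smul_sum, hμdef,
      gAvg, gAvg, ← smul_sub, Finset.sum_sub_distrib]
  have hZ : ∑ i, q i • Z i = 0 := by
    have : ∀ i : Fin n, q i • Z i = (b:ℝ)⁻¹ • (q i • X i - q i • μ) := by
      intro i; rw [hZdef]; rw [smul_comm, smul_sub]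
    rw [Finset.sum_congr rfl (fun i _ => this i), ← Finset.smul_sum,
      Finset.sum_sub_distrib, hμ, ← Finset.sum_smul, hqs, one_smul, sub_self, smul_zero]
  have harg : ∀ ι : Fin b → Fin n,
      (b : ℝ)⁻¹ • ∑ j : Fin b, (q (ι j) * (n : ℝ))⁻¹ • (gf (ι j) w - gf (ι j) w') + v'
        - gAvg gf w = (∑ j, Z (ι j)) + c := by
    intro ι
    have : ∑ j, Z (ι j) = (b:ℝ)⁻¹ • (∑ j, X (ι j)) - μ := by
      simp only [hZdef, smul_sub]
      rw [Finset.sum_sub_distrib, ← Finset.smul_sum, Finset.sum_const]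
      congr 1
      rw [← Nat.cast_smul_eq_nsmul ℝ, smul_smul]
      simp [Finset.card_univ, mul_inv_cancel₀ hb0.ne']
    rw [this, hcdef, hμdef]
    abel
  rw [Finset.sum_congr rfl (fun ι _ => by rw [harg ι])]
  rw [key_expect q hqs Z hZ c b]
  have hXb : ∀ i, ‖X i‖ ^ 2 ≤ LΩ ^ 2 * ‖w - w'‖ ^ 2 := by
    intro i
    rcases eq_or_ne w w' with rfl | hww
    · simp [hX]
    · have hw0 : (0:ℝ) < ‖w - w'‖ := by
        rw [norm_pos_iff]; exact sub_ne_zero_of_ne hww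
      have hLi : 0 ≤ L i := by
        have h0 := (norm_nonneg (gf i w - gf i w')).trans (hLip i w w')
        nlinarith
      have hLΩi : L i / ((n:ℝ) * q i) ≤ LΩ := hLΩ.2 ⟨i, rfl⟩
      have hqn : (0:ℝ) < q i * (n:ℝ) := by
        have := hq i
        have : (0:ℝ) < (n:ℝ) := by exact_mod_cast hn
        positivity
      have hXle : ‖X i‖ ≤ LΩ * ‖w - w'‖ := by
        rw [hX]
        simp only [norm_smul, norm_inv, Real.norm_eq_abs]
        rw [abs_of_pos hqn]
        calc (q i * (n:ℝ))⁻¹ * ‖gf i w - gf i w'‖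
            ≤ (q i * (n:ℝ))⁻¹ * (L i * ‖w - w'‖) :=
              mul_le_mul_of_nonneg_left (hLip i w w') (inv_pos.mpr hqn).le
          _ = (L i / ((n:ℝ) * q i)) * ‖w - w'‖ := by
              rw [div_eq_mul_inv, mul_comm ((n:ℝ)) (q i)]; ring
          _ ≤ LΩ * ‖w - w'‖ := mul_le_mul_of_nonneg_right hLΩi hw0.le
      calc ‖X i‖ ^ 2 ≤ (LΩ * ‖w - w'‖) ^ 2 :=
            pow_le_pow_left₀ (norm_nonneg _) hXle 2
        _ = LΩ ^ 2 * ‖w - w'‖ ^ 2 := by ring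
  have hin : ∑ i, q i * ⟪X i, μ⟫ = ‖μ‖ ^ 2 := by
    calc ∑ i, q i * ⟪X i, μ⟫ = ∑ i, ⟪q i • X i, μ⟫ :=
          Finset.sum_congr rfl fun i _ => (real_inner_smul_left (X i) μ (q i)).symm
      _ = ⟪∑ i, q i • X i, μ⟫ := (sum_inner _ _ _).symm
      _ = ‖μ‖ ^ 2 := by rw [hμ, real_inner_self_eq_norm_sq]
  have hvar : ∑ i, q i * ‖X i - μ‖ ^ 2 ≤ LΩ ^ 2 * ‖w - w'‖ ^ 2 := by
    have h1 : ∑ i, q i * ‖X i - μ‖ ^ 2 = ∑ i, q i * ‖X i‖ ^ 2 - ‖μ‖ ^ 2 := by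
      calc ∑ i, q i * ‖X i - μ‖ ^ 2
          = ∑ i, (q i * ‖X i‖ ^ 2 - 2 * (q i * ⟪X i, μ⟫) + q i * ‖μ‖ ^ 2) := by
            refine Finset.sum_congr rfl fun i _ => ?_
            rw [norm_sub_sq_real]; ring
        _ = ∑ i, q i * ‖X i‖ ^ 2 - 2 * ∑ i, q i * ⟪X i, μ⟫
              + (∑ i, q i) * ‖μ‖ ^ 2 := by
            rw [Finset.sum_add_distrib, Finset.sum_sub_distrib, ← Finset.mul_sum,
              ← Finset.sum_mul]
        _ = ∑ i, q i * ‖X i‖ ^ 2 - ‖μ‖ ^ 2 := by rw [hin, hqs]; ring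
    have h2 : ∑ i, q i * ‖X i‖ ^ 2 ≤ LΩ ^ 2 * ‖w - w'‖ ^ 2 := by
      calc ∑ i, q i * ‖X i‖ ^ 2 ≤ ∑ i, q i * (LΩ ^ 2 * ‖w - w'‖ ^ 2) :=
            Finset.sum_le_sum fun i _ =>
              mul_le_mul_of_nonneg_left (hXb i) (hq i).le
        _ = LΩ ^ 2 * ‖w - w'‖ ^ 2 := by rw [← Finset.sum_mul, hqs, one_mul]
    nlinarith [sq_nonneg ‖μ‖]
  have hZn : ∀ i : Fin n, ‖Z i‖ ^ 2 = (b:ℝ)⁻¹ ^ 2 * ‖X i - μ‖ ^ 2 := by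
    intro i
    rw [hZdef]
    rw [norm_smul, norm_inv, Real.norm_natCast, mul_pow]
  have hfin : (b:ℝ) * ∑ i, q i * ‖Z i‖ ^ 2 ≤ LΩ ^ 2 / (b:ℝ) * ‖w - w'‖ ^ 2 := by
    have : ∑ i, q i * ‖Z i‖ ^ 2 = (b:ℝ)⁻¹ ^ 2 * ∑ i, q i * ‖X i - μ‖ ^ 2 := by
      rw [Finset.mul_sum]
      refine Finset.sum_congr rfl fun i _ => ?_
      rw [hZn i]; ring
    rw [this]
    calc (b:ℝ) * ((b:ℝ)⁻¹ ^ 2 * ∑ i, q i * ‖X i - μ‖ ^ 2)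
        = (b:ℝ)⁻¹ * ∑ i, q i * ‖X i - μ‖ ^ 2 := by
          field_simp
      _ ≤ (b:ℝ)⁻¹ * (LΩ ^ 2 * ‖w - w'‖ ^ 2) :=
          mul_le_mul_of_nonneg_left hvar (inv_pos.mpr hb0).le
      _ = LΩ ^ 2 / (b:ℝ) * ‖w - w'‖ ^ 2 := by rw [div_eq_mul_inv]; ring
  linarith
end

section
/- Let ω > 0, 0 < α² ≤ α¹ be real numbers, and let s, y, u' ∈ ℝ^d. Consider the problem of minimizing ‖s − Diag(u) y‖₂² + ω ∑_{i=1}^d (u^i − u'^i)² over all u ∈ ℝ^d with α² ≤ u^i ≤ α¹ for each i (equivalently, minimizing ‖s − U y‖₂² + ω‖U − Diag(u')‖_F² over diagonal matrices U with α² I ≼ U ≼ α¹ I). This problem has a unique solution u given coordinatewise by u^i = α² if (s^i y^i + ω u'^i)/((y^i)² + ω) < α², u^i = α¹ if (s^i y^i + ω u'^i)/((y^i)² + ω) > α¹, and u^i = (s^i y^i + ω u'^i)/((y^i)² + ω) otherwise. -/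
/-!
The objective is separable, so a point of the box minimizes it iff each coordinate minimizes
its own term over `[α², α¹]`. The `i`-th term is the quadratic `a t² - 2 b t + const` with
`a = (yⁱ)² + ω > 0` and `b = sⁱyⁱ + ω u'ⁱ`; writing `c` for `b / a` clamped to the interval,
`f t - f c = a (t - c)² + 2 a (c - b / a) (t - c)`, and the last product is nonnegative on the
interval (the variational inequality of the projection), so `f t ≥ f c + a (t - c)²`.
-/

open Set Finset

section SeparableMinimization

variable {ι α β : Type*} [Fintype ι]
  [AddCommMonoid β] [PartialOrder β] [IsOrderedCancelAddMonoid β]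

theorem isMinOn_pi_sum_iff {S : ι → Set α} {g : ι → α → β} {u : ι → α}
    (hu : u ∈ univ.pi S) :
    IsMinOn (fun z => ∑ i, g i (z i)) (univ.pi S) u ↔ ∀ i, IsMinOn (g i) (S i) (u i) := by
  classical
  rw [mem_univ_pi] at hu
  constructor
  · intro hmin i t ht
    have hupdate : Function.update u i t ∈ univ.pi S := by
      rw [mem_univ_pi]
      intro j
      rcases eq_or_ne j i with rfl | hji
      · simpa using ht
      · simpa [Function.update_of_ne hji] using hu j
    have hle : ∑ j, g j (u j) ≤ ∑ j, g j (Function.update u i t j) := hmin hupdate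
    simp only [Function.apply_update (fun j => g j)] at hle
    rw [sum_update_of_mem (mem_univ i), sum_eq_add_sum_sdiff_singleton_of_mem (mem_univ i)] at hle
    exact le_of_add_le_add_right hle
  · intro hmin z hz
    rw [mem_univ_pi] at hz
    exact sum_le_sum fun i _ => hmin i (hz i)

end SeparableMinimization

section Clamp

noncomputable def clampIcc (lo hi p : ℝ) : ℝ :=
  if p < lo then lo else if hi < p then hi else p

variable {lo hi : ℝ}

theorem clampIcc_mem (h : lo ≤ hi) (p : ℝ) : clampIcc lo hi p ∈ Icc lo hi := by
  unfold clampIcc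
  split_ifs with hlo hhi
  · exact ⟨le_rfl, h⟩
  · exact ⟨h, le_rfl⟩
  · exact ⟨not_lt.mp hlo, not_lt.mp hhi⟩

theorem clampIcc_sub_mul_sub_nonneg (p : ℝ) {t : ℝ} (ht : t ∈ Icc lo hi) :
    0 ≤ (clampIcc lo hi p - p) * (t - clampIcc lo hi p) := by
  unfold clampIcc
  split_ifs with hlo hhi
  · exact mul_nonneg (by linarith) (by linarith [ht.1])
  · exact mul_nonneg_of_nonpos_of_nonpos (by linarith) (by linarith [ht.2])
  · simp

end Clamp

section Coordinate

def diagBBCoordCost (ω s y u' c : ℝ) : ℝ :=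
  (s - c * y) ^ 2 + ω * (c - u') ^ 2

variable {ω s y u' lo hi : ℝ}

theorem sq_add_diagBBCoordCost_clampIcc_le (ha : 0 ≤ y ^ 2 + ω) {p : ℝ}
    (hp : s * y + ω * u' = (y ^ 2 + ω) * p) {t : ℝ} (ht : t ∈ Icc lo hi) :
    (y ^ 2 + ω) * (t - clampIcc lo hi p) ^ 2 + diagBBCoordCost ω s y u' (clampIcc lo hi p)
      ≤ diagBBCoordCost ω s y u' t := by
  set c := clampIcc lo hi p
  have hexpand : diagBBCoordCost ω s y u' t - diagBBCoordCost ω s y u' c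
      = (y ^ 2 + ω) * (t - c) ^ 2 + 2 * (y ^ 2 + ω) * ((c - p) * (t - c)) := by
    unfold diagBBCoordCost
    linear_combination (-2 * (t - c)) * hp
  linarith [mul_nonneg ha (clampIcc_sub_mul_sub_nonneg p ht)]

theorem isMinOn_diagBBCoordCost_iff (ha : 0 < y ^ 2 + ω) (h : lo ≤ hi) {t : ℝ}
    (ht : t ∈ Icc lo hi) :
    IsMinOn (diagBBCoordCost ω s y u') (Icc lo hi) t
      ↔ t = clampIcc lo hi ((s * y + ω * u') / (y ^ 2 + ω)) := by
  set p := (s * y + ω * u') / (y ^ 2 + ω)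
  have hp : s * y + ω * u' = (y ^ 2 + ω) * p := (mul_div_cancel₀ _ ha.ne').symm
  constructor
  · intro hmin
    have hsq := sq_add_diagBBCoordCost_clampIcc_le ha.le hp ht
    have hle : diagBBCoordCost ω s y u' t ≤ diagBBCoordCost ω s y u' (clampIcc lo hi p) :=
      hmin (clampIcc_mem h p)
    have : (t - clampIcc lo hi p) ^ 2 = 0 :=
      le_antisymm (nonpos_of_mul_nonpos_right (by linarith) ha) (sq_nonneg _)
    exact sub_eq_zero.mp (pow_eq_zero_iff two_ne_zero |>.mp this)
  · rintro rfl t' ht'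
    exact le_of_add_le_of_nonneg_right (sq_add_diagBBCoordCost_clampIcc_le ha.le hp ht')
      (by positivity)

end Coordinate

theorem diagonal_bb_subproblem_solution_general {d : ℕ} (ω : ℝ) (hω : 0 < ω)
    (α1 α2 : ℝ) (hαle : α2 ≤ α1) (s y u' : Fin d → ℝ) :
    ∀ u : Fin d → ℝ,
      ((∀ i, α2 ≤ u i ∧ u i ≤ α1) ∧
        ∀ z : Fin d → ℝ, (∀ i, α2 ≤ z i ∧ z i ≤ α1) →
          (∑ i, (s i - u i * y i) ^ 2) + ω * ∑ i, (u i - u' i) ^ 2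
            ≤ (∑ i, (s i - z i * y i) ^ 2) + ω * ∑ i, (z i - u' i) ^ 2)
      ↔ u = fun i =>
          if (s i * y i + ω * u' i) / ((y i) ^ 2 + ω) < α2 then α2
          else if α1 < (s i * y i + ω * u' i) / ((y i) ^ 2 + ω) then α1
          else (s i * y i + ω * u' i) / ((y i) ^ 2 + ω) := by
  intro u
  set box : Set (Fin d → ℝ) := univ.pi fun _ => Icc α2 α1
  have hproblem : ((∀ i, α2 ≤ u i ∧ u i ≤ α1) ∧
      ∀ z : Fin d → ℝ, (∀ i, α2 ≤ z i ∧ z i ≤ α1) →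
        (∑ i, (s i - u i * y i) ^ 2) + ω * ∑ i, (u i - u' i) ^ 2
          ≤ (∑ i, (s i - z i * y i) ^ 2) + ω * ∑ i, (z i - u' i) ^ 2)
      ↔ u ∈ box ∧ IsMinOn (fun z => ∑ i, diagBBCoordCost ω (s i) (y i) (u' i) (z i)) box u := by
    simp only [box, diagBBCoordCost, isMinOn_iff, mem_univ_pi, Set.mem_Icc, mul_sum,
      sum_add_distrib]
  rw [hproblem, funext_iff]
  constructor
  · rintro ⟨hu, hmin⟩ i
    exact (isMinOn_diagBBCoordCost_iff (by positivity) hαle (mem_univ_pi.mp hu i)).mp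
      ((isMinOn_pi_sum_iff hu).mp hmin i)
  · intro hu
    have hmem : u ∈ box := mem_univ_pi.mpr fun i => (hu i).symm ▸ clampIcc_mem hαle _
    exact ⟨hmem, (isMinOn_pi_sum_iff hmem).mpr fun i =>
      (isMinOn_diagBBCoordCost_iff (by positivity) hαle (mem_univ_pi.mp hmem i)).mpr (hu i)⟩

/-- the diagonal BB-metric subproblem
`min ‖s − Diag(u)y‖₂² + ω ∑ᵢ (uᶦ − u'ᶦ)²` over the box `α² ≤ uᶦ ≤ α¹` has a unique solution,
given coordinatewise by clipping `(sᶦyᶦ + ω u'ᶦ)/((yᶦ)² + ω)` to `[α², α¹]`: a point `u` of the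
box is a minimizer iff it equals that closed-form solution. -/
theorem diagonal_bb_subproblem_solution {d : ℕ} (ω : ℝ) (hω : 0 < ω)
    (α1 α2 : ℝ) (hα : 0 < α2) (hαle : α2 ≤ α1) (s y u' : Fin d → ℝ) :
    ∀ u : Fin d → ℝ,
      ((∀ i, α2 ≤ u i ∧ u i ≤ α1) ∧
        ∀ z : Fin d → ℝ, (∀ i, α2 ≤ z i ∧ z i ≤ α1) →
          (∑ i, (s i - u i * y i) ^ 2) + ω * ∑ i, (u i - u' i) ^ 2
            ≤ (∑ i, (s i - z i * y i) ^ 2) + ω * ∑ i, (z i - u' i) ^ 2)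
      ↔ u = fun i =>
          if (s i * y i + ω * u' i) / ((y i) ^ 2 + ω) < α2 then α2
          else if α1 < (s i * y i + ω * u' i) / ((y i) ^ 2 + ω) then α1
          else (s i * y i + ω * u' i) / ((y i) ^ 2 + ω) :=
  diagonal_bb_subproblem_solution_general ω hω α1 α2 hαle s y u'
end
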